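/- Let a, b, c ∈ {1,…,N} be pairwise distinct with a ≤ n and b, c > n (i.e. p(a)=0, p(b)=p(c)=1), and let λ_a, λ_b, λ_c ∈ ℂ be pairwise distinct. Then [E_{ab}E_{ba}/(λ_a−λ_b), E_{bc}E_{cb}/(λ_b−λ_c)] + [E_{ac}E_{ca}/(λ_a−λ_c), E_{bc}E_{cb}/(λ_b−λ_c)] − [E_{ac}E_{ca}/(λ_a−λ_c), E_{ba}E_{ab}/(λ_b−λ_a)] = 0. -/
import Mathlib


open Finset

namespace Glnm

/-- Parity: `p(a) = 0` for bosonic indices (`a ≤ n` in 1-based terms, i.e. `a.val < n`),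
`p(a) = 1` for fermionic ones. -/
def par (n N : ℕ) (a : Fin N) : ℕ := if (a : ℕ) < n then 0 else 1

/-- The Koszul-sign realization `e^{(j)}_{ab} = σ^{p(a)+p(b)} ⊗ ⋯ ⊗ σ^{p(a)+p(b)} ⊗ e_{ab} ⊗ I ⊗ ⋯ ⊗ I`
on `(ℂ^N)^{⊗k}`, realized as matrices indexed by tuples `Fin k → Fin N`. -/
noncomputable def eop (n N k : ℕ) (j : Fin k) (a b : Fin N) :
    Matrix (Fin k → Fin N) (Fin k → Fin N) ℂ :=
  fun x y =>
    (if x j = a ∧ y j = b then (1 : ℂ) else 0) *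
      (-1 : ℂ) ^ ((par n N a + par n N b) *
        ∑ l ∈ Finset.univ.filter (fun l : Fin k => l < j), par n N (x l)) *
      ∏ l ∈ Finset.univ.filter (fun l : Fin k => l ≠ j),
        (if x l = y l then (1 : ℂ) else 0)

/-- `E_{ab} = ∑_{j=1}^k e^{(j)}_{ab}`. -/
noncomputable def Egen (n N k : ℕ) (a b : Fin N) : Matrix (Fin k → Fin N) (Fin k → Fin N) ℂ :=
  ∑ j : Fin k, eop n N k j a b

/-- The graded permutation `P_{ij} = ∑_{a,b} (−1)^{p(b)} e^{(i)}_{ab} e^{(j)}_{ba}`. -/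
noncomputable def Pg (n N k : ℕ) (i j : Fin k) : Matrix (Fin k → Fin N) (Fin k → Fin N) ℂ :=
  ∑ a : Fin N, ∑ b : Fin N,
    ((-1 : ℂ) ^ par n N b) • (eop n N k i a b * eop n N k j b a)

/-- Commutator. -/
def comm {α : Type*} [Ring α] (X Y : α) : α := X * Y - Y * X

/-- Anticommutator. -/
def acomm {α : Type*} [Ring α] (X Y : α) : α := X * Y + Y * X

/-- The dynamical connection matrix
`A_a = ∑_j z_j e^{(j)}_{aa} + ∑_{b ≠ a} (−1)^{p(b)} (E_{ab}E_{ba} − E_{aa})/(λ_a − λ_b)`. -/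
noncomputable def dynA (n N k : ℕ) (z : Fin k → ℂ) (lam : Fin N → ℂ) (a : Fin N) :
    Matrix (Fin k → Fin N) (Fin k → Fin N) ℂ :=
  (∑ j : Fin k, z j • eop n N k j a a) +
    ∑ b ∈ Finset.univ.filter (fun b : Fin N => b ≠ a),
      (((-1 : ℂ) ^ par n N b) / (lam a - lam b)) •
        (Egen n N k a b * Egen n N k b a - Egen n N k a a)

/-- The (twisted) KZ connection matrix
`B_i = ∑_c λ_c e^{(i)}_{cc} + ∑_{j ≠ i} P_{ij}/(z_i − z_j)`. -/
noncomputable def kzB (n N k : ℕ) (z : Fin k → ℂ) (lam : Fin N → ℂ) (i : Fin k) :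
    Matrix (Fin k → Fin N) (Fin k → Fin N) ℂ :=
  (∑ c : Fin N, lam c • eop n N k i c c) +
    ∑ j ∈ Finset.univ.filter (fun j : Fin k => j ≠ i),
      ((z i - z j)⁻¹) • Pg n N k i j

/-- Adjacent graded permutation `P_{s_l} = P_{l,l+1}` (0-based slots). -/
noncomputable def Ps (n N k : ℕ) (l : ℕ) (h : l + 1 < k) :
    Matrix (Fin k → Fin N) (Fin k → Fin N) ℂ :=
  Pg n N k ⟨l, Nat.lt_of_succ_lt h⟩ ⟨l + 1, h⟩

/-- The highest-configuration vector `e_1 ⊗ ⋯ ⊗ e_N ∈ (ℂ^N)^{⊗N}`. -/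
noncomputable def baseVec (N : ℕ) : (Fin N → Fin N) → ℂ :=
  fun x => if x = (fun j => j) then 1 else 0

/-- `Ω^i = ∑_{σ ∈ S_N} (−1)^{i·ℓ(σ)} P_σ (e_1 ⊗ ⋯ ⊗ e_N)`, where `P_σ = ρ σ` for the
(unique) multiplicative extension `ρ` of the adjacent graded permutations. -/
noncomputable def OmegaVec (N : ℕ) (i : ℕ)
    (ρ : Equiv.Perm (Fin N) →* Matrix (Fin N → Fin N) (Fin N → Fin N) ℂ) :
    (Fin N → Fin N) → ℂ :=
  ∑ σ : Equiv.Perm (Fin N),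
    (((Equiv.Perm.sign σ : ℤ) : ℂ) ^ i) • Matrix.mulVec (ρ σ) (baseVec N)

/-- The set of `(z, λ)` with pairwise distinct `z`'s and pairwise distinct `λ`'s. -/
def Usep (N : ℕ) : Set ((Fin N → ℂ) × (Fin N → ℂ)) :=
  {p | (∀ i j : Fin N, i ≠ j → p.1 i ≠ p.1 j) ∧ (∀ a b : Fin N, a ≠ b → p.2 a ≠ p.2 b)}

lemma neg_one_pow_congr {m' n' : ℕ} (t : ℤ) (h : (m' : ℤ) - n' = 2 * t) :
    ((-1 : ℂ)) ^ m' = (-1) ^ n' := by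
  rcases Nat.even_or_odd m' with hm | hm
  · have hn : Even n' := by
      rw [Nat.even_iff] at hm ⊢
      omega
    rw [hm.neg_one_pow, hn.neg_one_pow]
  · have hn : Odd n' := by
      rw [Nat.odd_iff] at hm ⊢
      omega
    rw [hm.neg_one_pow, hn.neg_one_pow]

lemma eop_apply (n N k : ℕ) (j : Fin k) (a b : Fin N) (x y : Fin k → Fin N) :
    eop n N k j a b x y =
      if x j = a ∧ y = Function.update x j b then
        (-1 : ℂ) ^ ((par n N a + par n N b) *
          ∑ l ∈ Finset.univ.filter (fun l : Fin k => l < j), par n N (x l))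
      else 0 := by
  simp only [eop]
  by_cases hxa : x j = a
  · by_cases hy : y = Function.update x j b
    · subst hy
      have hprod : ∏ l ∈ Finset.univ.filter (fun l : Fin k => l ≠ j),
          (if x l = Function.update x j b l then (1:ℂ) else 0) = 1 := by
        apply Finset.prod_eq_one
        intro l hl
        rw [Finset.mem_filter] at hl
        rw [Function.update_of_ne hl.2]
        simp
      rw [hprod, if_pos ⟨hxa, Function.update_self j b x⟩, if_pos ⟨hxa, rfl⟩, one_mul, mul_one]
    · by_cases hyj : y j = b
      · have hne : ∃ l, l ≠ j ∧ y l ≠ x l := by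
          by_contra hco
          push_neg at hco
          apply hy
          funext l
          by_cases hlj : l = j
          · subst hlj; rw [Function.update_self]; exact hyj
          · rw [Function.update_of_ne hlj]; exact hco l hlj
        obtain ⟨l, hlj, hlx⟩ := hne
        have hz : ∏ l ∈ Finset.univ.filter (fun l : Fin k => l ≠ j),
            (if x l = y l then (1:ℂ) else 0) = 0 := by
          apply Finset.prod_eq_zero (Finset.mem_filter.2 ⟨Finset.mem_univ l, hlj⟩)
          rw [if_neg (fun h => hlx h.symm)]
        rw [hz, mul_zero, if_neg (fun h => hy h.2)]
      · rw [if_neg (fun h => hyj h.2), zero_mul, zero_mul, if_neg (fun h => hy h.2)]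
  · rw [if_neg (fun h => hxa h.1), if_neg (fun h => hxa h.1), zero_mul, zero_mul]


lemma eop_mul (n N k : ℕ) (i : Fin k) (a b : Fin N) (x y : Fin k → Fin N)
    (M : Matrix (Fin k → Fin N) (Fin k → Fin N) ℂ) :
    (eop n N k i a b * M) x y =
      if x i = a then
        ((-1 : ℂ) ^ ((par n N a + par n N b) *
            ∑ l ∈ Finset.univ.filter (fun l : Fin k => l < i), par n N (x l))) *
          M (Function.update x i b) y
      else 0 := by
  rw [Matrix.mul_apply]
  simp only [eop_apply, ite_mul, zero_mul]
  by_cases hxa : x i = a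
  · simp only [hxa, true_and, if_pos]
    rw [Finset.sum_ite_eq' Finset.univ (Function.update x i b)
      (fun z => ((-1:ℂ) ^ ((par n N a + par n N b) *
        ∑ l ∈ Finset.univ.filter (fun l : Fin k => l < i), par n N (x l))) * M z y)]
    simp
  · simp [hxa]


lemma eop_same_slot (n N k : ℕ) (j : Fin k) (a b c d : Fin N) :
    eop n N k j a b * eop n N k j c d = if b = c then eop n N k j a d else 0 := by
  ext x y
  rw [eop_mul, eop_apply]
  have hS : (∑ l ∈ Finset.univ.filter (fun l : Fin k => l < j),
      par n N (Function.update x j b l))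
      = ∑ l ∈ Finset.univ.filter (fun l : Fin k => l < j), par n N (x l) := by
    refine Finset.sum_congr rfl fun l hl => ?_
    rw [Finset.mem_filter] at hl
    rw [Function.update_of_ne (ne_of_lt hl.2)]
  simp only [Function.update_self, Function.update_idem, hS]
  by_cases hbc : b = c
  · subst hbc
    rw [if_pos rfl, eop_apply]
    by_cases hxa : x j = a
    · by_cases hy : y = Function.update x j d
      · rw [if_pos hxa, if_pos ⟨rfl, hy⟩, if_pos ⟨hxa, hy⟩, ← pow_add]
        exact neg_one_pow_congr
          (par n N b * ∑ l ∈ Finset.univ.filter (fun l : Fin k => l < j), par n N (x l))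
          (by push_cast; ring)
      · rw [if_pos hxa, if_neg (fun h => hy (h.2 : _)), mul_zero, if_neg (fun h => hy (h.2 : _))]
    · rw [if_neg hxa, if_neg (fun h => hxa h.1)]
  · rw [if_neg hbc]
    by_cases hxa : x j = a
    · rw [if_pos hxa, if_neg (fun h => hbc h.1), mul_zero, Matrix.zero_apply]
    · rw [if_neg hxa, Matrix.zero_apply]


lemma eop_cross_lt (n N k : ℕ) {i j : Fin k} (hij : i < j) (a b c d : Fin N) :
    eop n N k i a b * eop n N k j c d =
      ((-1 : ℂ) ^ ((par n N a + par n N b) * (par n N c + par n N d))) •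
        (eop n N k j c d * eop n N k i a b) := by
  have hij' : i ≠ j := ne_of_lt hij
  have hji : j ≠ i := hij'.symm
  have hmem : i ∈ Finset.univ.filter (fun l : Fin k => l < j) :=
    Finset.mem_filter.2 ⟨Finset.mem_univ i, hij⟩
  ext x y
  rw [Matrix.smul_apply, eop_mul, eop_mul, eop_apply, eop_apply]
  have hfun : (fun l => par n N (Function.update x i b l))
      = Function.update (fun l => par n N (x l)) i (par n N b) := by
    funext l
    by_cases hl : l = i
    · subst hl; simp
    · rw [Function.update_of_ne hl, Function.update_of_ne hl]
  have hA2 : (∑ l ∈ Finset.univ.filter (fun l : Fin k => l < j),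
        par n N (Function.update x i b l))
      = par n N b + ∑ l ∈ (Finset.univ.filter (fun l : Fin k => l < j)) \ {i},
          par n N (x l) := by
    rw [hfun, Finset.sum_update_of_mem hmem]
  have hB2 : (∑ l ∈ Finset.univ.filter (fun l : Fin k => l < i),
        par n N (Function.update x j d l))
      = ∑ l ∈ Finset.univ.filter (fun l : Fin k => l < i), par n N (x l) := by
    refine Finset.sum_congr rfl fun l hl => ?_
    rw [Finset.mem_filter] at hl
    rw [Function.update_of_ne (ne_of_lt (lt_trans hl.2 hij))]
  have hSj : (∑ l ∈ Finset.univ.filter (fun l : Fin k => l < j), par n N (x l))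
      = par n N (x i) + ∑ l ∈ (Finset.univ.filter (fun l : Fin k => l < j)) \ {i},
          par n N (x l) := by
    rw [← Finset.add_sum_erase _ _ hmem, Finset.erase_eq]
  simp only [Function.update_of_ne hji, Function.update_of_ne hij',
    Function.update_comm hij', hA2, hB2, hSj, smul_eq_mul]
  by_cases h1 : x i = a
  · by_cases h2 : x j = c
    · by_cases h3 : y = Function.update (Function.update x j d) i b
      · rw [h1, if_pos rfl, if_pos ⟨h2, h3⟩, if_pos h2, if_pos ⟨rfl, h3⟩,
          ← pow_add, ← pow_add, ← pow_add]
        exact neg_one_pow_congr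
          (-(((par n N a) : ℤ) * ((par n N c) + (par n N d))))
          (by push_cast; ring)
      · simp [h3]
    · simp [h2]
  · simp [h1]


lemma eop_cross (n N k : ℕ) {i j : Fin k} (hij : i ≠ j) (a b c d : Fin N) :
    eop n N k i a b * eop n N k j c d =
      ((-1 : ℂ) ^ ((par n N a + par n N b) * (par n N c + par n N d))) •
        (eop n N k j c d * eop n N k i a b) := by
  rcases lt_or_gt_of_ne hij with h | h
  · exact eop_cross_lt n N k h a b c d
  · rw [eop_cross_lt n N k h c d a b, smul_smul, ← pow_add]
    have hev : Even ((par n N a + par n N b) * (par n N c + par n N d) +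
        (par n N c + par n N d) * (par n N a + par n N b)) :=
      ⟨(par n N a + par n N b) * (par n N c + par n N d), by ring⟩
    rw [hev.neg_one_pow, one_smul]

lemma Egen_rel (n N k : ℕ) (a b c d : Fin N) :
    Egen n N k a b * Egen n N k c d -
      ((-1 : ℂ) ^ ((par n N a + par n N b) * (par n N c + par n N d))) •
        (Egen n N k c d * Egen n N k a b) =
      (if b = c then Egen n N k a d else 0) -
        (if d = a then
          ((-1 : ℂ) ^ ((par n N a + par n N b) * (par n N c + par n N d))) •
            Egen n N k c b
        else 0) := by
  classical
  set s : ℂ := (-1 : ℂ) ^ ((par n N a + par n N b) * (par n N c + par n N d)) with hs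
  unfold Egen
  rw [Finset.sum_mul_sum, Finset.sum_mul_sum]
  rw [Finset.sum_comm (s := Finset.univ) (t := Finset.univ)
    (f := fun p q => eop n N k p c d * eop n N k q a b)]
  rw [Finset.smul_sum, ← Finset.sum_sub_distrib]
  have hterm : ∀ i : Fin k,
      ((∑ j : Fin k, eop n N k i a b * eop n N k j c d) -
        s • ∑ j : Fin k, eop n N k j c d * eop n N k i a b)
      = (if b = c then eop n N k i a d else 0) -
          (if d = a then s • eop n N k i c b else 0) := by
    intro i
    rw [Finset.smul_sum, ← Finset.sum_sub_distrib]
    have h2 : ∀ j : Fin k,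
        (eop n N k i a b * eop n N k j c d - s • (eop n N k j c d * eop n N k i a b))
        = if j = i then
            (if b = c then eop n N k i a d else 0) -
              (if d = a then s • eop n N k i c b else 0)
          else 0 := by
      intro j
      by_cases hji : j = i
      · subst hji
        rw [if_pos rfl, eop_same_slot, eop_same_slot]
        congr 1
        by_cases hda : d = a
        · subst hda
          rw [if_pos rfl, if_pos rfl]
        · rw [if_neg hda, if_neg hda, smul_zero]
      · rw [if_neg hji, eop_cross n N k (fun h => hji h.symm), sub_self]
    rw [Finset.sum_congr rfl (fun j _ => h2 j), Finset.sum_ite_eq' Finset.univ i, if_pos (Finset.mem_univ i)]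
  rw [Finset.sum_congr rfl (fun i _ => hterm i), Finset.sum_sub_distrib]
  congr 1
  · by_cases hbc : b = c
    · simp [hbc]
    · simp [hbc]
  · by_cases hda : d = a
    · simp [hda, Finset.smul_sum]
    · simp [hda]


end Glnm

set_option maxHeartbeats 1600000

open Glnm in
/-- three-index commutator identity for `p(a)=0`, `p(b)=p(c)=1`. -/
theorem triple_commutator_bff (n m k : ℕ) (hk : 1 ≤ k)
    (a b c : Fin (n + m)) (hab : a ≠ b) (hac : a ≠ c) (hbc : b ≠ c)
    (hpa : (a : ℕ) < n) (hpb : n ≤ (b : ℕ)) (hpc : n ≤ (c : ℕ))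
    (lamA lamB lamC : ℂ) (hl1 : lamA ≠ lamB) (hl2 : lamA ≠ lamC) (hl3 : lamB ≠ lamC) :
    comm ((lamA - lamB)⁻¹ • (Egen n (n + m) k a b * Egen n (n + m) k b a))
        ((lamB - lamC)⁻¹ • (Egen n (n + m) k b c * Egen n (n + m) k c b)) +
      comm ((lamA - lamC)⁻¹ • (Egen n (n + m) k a c * Egen n (n + m) k c a))
        ((lamB - lamC)⁻¹ • (Egen n (n + m) k b c * Egen n (n + m) k c b)) -
      comm ((lamA - lamC)⁻¹ • (Egen n (n + m) k a c * Egen n (n + m) k c a))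
        ((lamB - lamA)⁻¹ • (Egen n (n + m) k b a * Egen n (n + m) k a b)) = 0 := by
  have hPa : par n (n+m) a = 0 := if_pos hpa
  have hPb : par n (n+m) b = 1 := if_neg (Nat.not_lt.2 hpb)
  have hPc : par n (n+m) c = 1 := if_neg (Nat.not_lt.2 hpc)
  have h1 := Egen_rel n (n+m) k a b b c
  rw [hPa, hPb, hPc] at h1
  norm_num [hab, hac, hbc, Ne.symm hab, Ne.symm hac, Ne.symm hbc] at h1
  have h2 := Egen_rel n (n+m) k a b c b
  rw [hPa, hPb, hPc] at h2
  norm_num [hab, hac, hbc, Ne.symm hab, Ne.symm hac, Ne.symm hbc] at h2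
  have h3 := Egen_rel n (n+m) k b a b c
  rw [hPa, hPb, hPc] at h3
  norm_num [hab, hac, hbc, Ne.symm hab, Ne.symm hac, Ne.symm hbc] at h3
  have h4 := Egen_rel n (n+m) k b a c b
  rw [hPa, hPb, hPc] at h4
  norm_num [hab, hac, hbc, Ne.symm hab, Ne.symm hac, Ne.symm hbc] at h4
  have h5 := Egen_rel n (n+m) k a c b c
  rw [hPa, hPb, hPc] at h5
  norm_num [hab, hac, hbc, Ne.symm hab, Ne.symm hac, Ne.symm hbc] at h5
  have h6 := Egen_rel n (n+m) k a c c b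
  rw [hPa, hPb, hPc] at h6
  norm_num [hab, hac, hbc, Ne.symm hab, Ne.symm hac, Ne.symm hbc] at h6
  have h7 := Egen_rel n (n+m) k c a b c
  rw [hPa, hPb, hPc] at h7
  norm_num [hab, hac, hbc, Ne.symm hab, Ne.symm hac, Ne.symm hbc] at h7
  have h8 := Egen_rel n (n+m) k c a c b
  rw [hPa, hPb, hPc] at h8
  norm_num [hab, hac, hbc, Ne.symm hab, Ne.symm hac, Ne.symm hbc] at h8
  have h9 := Egen_rel n (n+m) k a c b a
  rw [hPa, hPb, hPc] at h9
  norm_num [hab, hac, hbc, Ne.symm hab, Ne.symm hac, Ne.symm hbc] at h9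
  have h10 := Egen_rel n (n+m) k a c a b
  rw [hPa, hPb, hPc] at h10
  norm_num [hab, hac, hbc, Ne.symm hab, Ne.symm hac, Ne.symm hbc] at h10
  have h11 := Egen_rel n (n+m) k c a b a
  rw [hPa, hPb, hPc] at h11
  norm_num [hab, hac, hbc, Ne.symm hab, Ne.symm hac, Ne.symm hbc] at h11
  have h12 := Egen_rel n (n+m) k c a a b
  rw [hPa, hPb, hPc] at h12
  norm_num [hab, hac, hbc, Ne.symm hab, Ne.symm hac, Ne.symm hbc] at h12
  -- product-form relations
  have r1 : Egen n (n+m) k a b * Egen n (n+m) k b c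
      = Egen n (n+m) k a c + Egen n (n+m) k b c * Egen n (n+m) k a b :=
    sub_eq_iff_eq_add.mp h1
  have r2 : Egen n (n+m) k a b * Egen n (n+m) k c b
      = Egen n (n+m) k c b * Egen n (n+m) k a b := sub_eq_zero.mp h2
  have r3 : Egen n (n+m) k b a * Egen n (n+m) k b c
      = Egen n (n+m) k b c * Egen n (n+m) k b a := sub_eq_zero.mp h3
  have r4 : Egen n (n+m) k b a * Egen n (n+m) k c b
      = -Egen n (n+m) k c a + Egen n (n+m) k c b * Egen n (n+m) k b a :=
    sub_eq_iff_eq_add.mp h4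
  have r5 : Egen n (n+m) k a c * Egen n (n+m) k b c
      = Egen n (n+m) k b c * Egen n (n+m) k a c := sub_eq_zero.mp h5
  have r6 : Egen n (n+m) k a c * Egen n (n+m) k c b
      = Egen n (n+m) k a b + Egen n (n+m) k c b * Egen n (n+m) k a c :=
    sub_eq_iff_eq_add.mp h6
  have r8 : Egen n (n+m) k c a * Egen n (n+m) k c b
      = Egen n (n+m) k c b * Egen n (n+m) k c a := sub_eq_zero.mp h8
  have r7 : Egen n (n+m) k c a * Egen n (n+m) k b c
      = -Egen n (n+m) k b a + Egen n (n+m) k b c * Egen n (n+m) k c a :=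
    sub_eq_iff_eq_add.mp h7
  have r9 : Egen n (n+m) k a c * Egen n (n+m) k b a
      = Egen n (n+m) k b c - Egen n (n+m) k b a * Egen n (n+m) k a c :=
    eq_sub_of_add_eq h9
  have r10 : Egen n (n+m) k a c * Egen n (n+m) k a b
      = -(Egen n (n+m) k a b * Egen n (n+m) k a c) :=
    eq_neg_of_add_eq_zero_left h10
  have r11 : Egen n (n+m) k c a * Egen n (n+m) k b a
      = -(Egen n (n+m) k b a * Egen n (n+m) k c a) :=
    eq_neg_of_add_eq_zero_left h11
  have r12 : Egen n (n+m) k c a * Egen n (n+m) k a b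
      = Egen n (n+m) k c b - Egen n (n+m) k a b * Egen n (n+m) k c a :=
    eq_sub_of_add_eq h12
  set Eab := Egen n (n+m) k a b
  set Eba := Egen n (n+m) k b a
  set Eac := Egen n (n+m) k a c
  set Eca := Egen n (n+m) k c a
  set Ebc := Egen n (n+m) k b c
  set Ecb := Egen n (n+m) k c b
  -- M = Eab*Eba + Eac*Eca commutes with Ebc and Ecb
  have hc1 : (Eab*Eba + Eac*Eca) * Ebc = Ebc * (Eab*Eba + Eac*Eca) := by
    calc (Eab*Eba + Eac*Eca) * Ebc
        = Eab*(Eba*Ebc) + Eac*(Eca*Ebc) := by noncomm_ring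
      _ = Eab*(Ebc*Eba) + Eac*(-Eba + Ebc*Eca) := by rw [r3, r7]
      _ = (Eab*Ebc)*Eba + (Eac*Ebc)*Eca - Eac*Eba := by noncomm_ring
      _ = (Egen n (n+m) k a c + Ebc*Eab)*Eba + (Ebc*Eac)*Eca - Eac*Eba := by rw [r1, r5]
      _ = Ebc * (Eab*Eba + Eac*Eca) := by noncomm_ring
  have hc2 : (Eab*Eba + Eac*Eca) * Ecb = Ecb * (Eab*Eba + Eac*Eca) := by
    calc (Eab*Eba + Eac*Eca) * Ecb
        = Eab*(Eba*Ecb) + Eac*(Eca*Ecb) := by noncomm_ring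
      _ = Eab*(-Eca + Ecb*Eba) + Eac*(Ecb*Eca) := by rw [r4, r8]
      _ = (Eab*Ecb)*Eba + (Eac*Ecb)*Eca - Eab*Eca := by noncomm_ring
      _ = (Ecb*Eab)*Eba + (Egen n (n+m) k a b + Ecb*Eac)*Eca - Eab*Eca := by rw [r2, r6]
      _ = Ecb * (Eab*Eba + Eac*Eca) := by noncomm_ring
  have hM : (Eab*Eba + Eac*Eca) * (Ebc*Ecb) = (Ebc*Ecb) * (Eab*Eba + Eac*Eca) := by
    calc (Eab*Eba + Eac*Eca) * (Ebc*Ecb)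
        = ((Eab*Eba + Eac*Eca) * Ebc)*Ecb := by noncomm_ring
      _ = (Ebc*(Eab*Eba + Eac*Eca))*Ecb := by rw [hc1]
      _ = Ebc*((Eab*Eba + Eac*Eca)*Ecb) := by noncomm_ring
      _ = Ebc*(Ecb*(Eab*Eba + Eac*Eca)) := by rw [hc2]
      _ = (Ebc*Ecb) * (Eab*Eba + Eac*Eca) := by noncomm_ring
  have hsum1 : ((Eab*Eba)*(Ebc*Ecb) - (Ebc*Ecb)*(Eab*Eba))
      + ((Eac*Eca)*(Ebc*Ecb) - (Ebc*Ecb)*(Eac*Eca)) = 0 := by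
    calc ((Eab*Eba)*(Ebc*Ecb) - (Ebc*Ecb)*(Eab*Eba))
          + ((Eac*Eca)*(Ebc*Ecb) - (Ebc*Ecb)*(Eac*Eca))
        = (Eab*Eba + Eac*Eca) * (Ebc*Ecb) - (Ebc*Ecb) * (Eab*Eba + Eac*Eca) := by
          noncomm_ring
      _ = 0 := by rw [hM, sub_self]
  -- [X,Y]
  have d1 : (Eab*Eba)*Ebc = Ebc*(Eab*Eba) + Eac*Eba := by
    calc (Eab*Eba)*Ebc = Eab*(Eba*Ebc) := by noncomm_ring
      _ = Eab*(Ebc*Eba) := by rw [r3]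
      _ = (Eab*Ebc)*Eba := by noncomm_ring
      _ = (Egen n (n+m) k a c + Ebc*Eab)*Eba := by rw [r1]
      _ = Ebc*(Eab*Eba) + Eac*Eba := by noncomm_ring
  have d2 : (Eab*Eba)*Ecb = Ecb*(Eab*Eba) - Eab*Eca := by
    calc (Eab*Eba)*Ecb = Eab*(Eba*Ecb) := by noncomm_ring
      _ = Eab*(-Eca + Ecb*Eba) := by rw [r4]
      _ = (Eab*Ecb)*Eba - Eab*Eca := by noncomm_ring
      _ = (Ecb*Eab)*Eba - Eab*Eca := by rw [r2]
      _ = Ecb*(Eab*Eba) - Eab*Eca := by noncomm_ring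
  have hXY : (Eab*Eba)*(Ebc*Ecb) - (Ebc*Ecb)*(Eab*Eba)
      = (Eac*Eba)*Ecb - Ebc*(Eab*Eca) := by
    have step : (Eab*Eba)*(Ebc*Ecb)
        = ((Eac*Eba)*Ecb - Ebc*(Eab*Eca)) + (Ebc*Ecb)*(Eab*Eba) := by
      calc (Eab*Eba)*(Ebc*Ecb) = ((Eab*Eba)*Ebc)*Ecb := by noncomm_ring
        _ = (Ebc*(Eab*Eba) + Eac*Eba)*Ecb := by rw [d1]
        _ = Ebc*((Eab*Eba)*Ecb) + (Eac*Eba)*Ecb := by noncomm_ring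
        _ = Ebc*(Ecb*(Eab*Eba) - Eab*Eca) + (Eac*Eba)*Ecb := by rw [d2]
        _ = ((Eac*Eba)*Ecb - Ebc*(Eab*Eca)) + (Ebc*Ecb)*(Eab*Eba) := by noncomm_ring
    exact sub_eq_iff_eq_add.mpr step
  -- [Z,W]
  have d3 : (Eac*Eca)*Eba = Eba*(Eac*Eca) - Ebc*Eca := by
    calc (Eac*Eca)*Eba = Eac*(Eca*Eba) := by noncomm_ring
      _ = Eac*(-(Eba*Eca)) := by rw [r11]
      _ = -((Eac*Eba)*Eca) := by noncomm_ring
      _ = -((Egen n (n+m) k b c - Eba*Eac)*Eca) := by rw [r9]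
      _ = Eba*(Eac*Eca) - Ebc*Eca := by noncomm_ring
  have d4 : (Eac*Eca)*Eab = Eab*(Eac*Eca) + Eac*Ecb := by
    calc (Eac*Eca)*Eab = Eac*(Eca*Eab) := by noncomm_ring
      _ = Eac*(Egen n (n+m) k c b - Eab*Eca) := by rw [r12]
      _ = Eac*Ecb - (Eac*Eab)*Eca := by noncomm_ring
      _ = Eac*Ecb - (-(Eab*Eac))*Eca := by rw [r10]
      _ = Eab*(Eac*Eca) + Eac*Ecb := by noncomm_ring
  have hZW : (Eac*Eca)*(Eba*Eab) - (Eba*Eab)*(Eac*Eca)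
      = (Eba*Eac)*Ecb - Ebc*(Eca*Eab) := by
    have step : (Eac*Eca)*(Eba*Eab)
        = ((Eba*Eac)*Ecb - Ebc*(Eca*Eab)) + (Eba*Eab)*(Eac*Eca) := by
      calc (Eac*Eca)*(Eba*Eab) = ((Eac*Eca)*Eba)*Eab := by noncomm_ring
        _ = (Eba*(Eac*Eca) - Ebc*Eca)*Eab := by rw [d3]
        _ = Eba*((Eac*Eca)*Eab) - Ebc*(Eca*Eab) := by noncomm_ring
        _ = Eba*(Eab*(Eac*Eca) + Eac*Ecb) - Ebc*(Eca*Eab) := by rw [d4]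
        _ = ((Eba*Eac)*Ecb - Ebc*(Eca*Eab)) + (Eba*Eab)*(Eac*Eca) := by noncomm_ring
    exact sub_eq_iff_eq_add.mpr step
  have hsum2 : ((Eab*Eba)*(Ebc*Ecb) - (Ebc*Ecb)*(Eab*Eba))
      + ((Eac*Eca)*(Eba*Eab) - (Eba*Eab)*(Eac*Eca)) = 0 := by
    rw [hXY, hZW]
    calc ((Eac*Eba)*Ecb - Ebc*(Eab*Eca)) + ((Eba*Eac)*Ecb - Ebc*(Eca*Eab))
        = (Eac*Eba + Eba*Eac)*Ecb - Ebc*(Eca*Eab + Eab*Eca) := by noncomm_ring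
      _ = Ebc*Ecb - Ebc*Ecb := by rw [h9, h12]
      _ = 0 := sub_self _
  -- final assembly
  have e1 : ∀ (s t : ℂ) (A B : Matrix (Fin k → Fin (n+m)) (Fin k → Fin (n+m)) ℂ),
      comm (s • A) (t • B) = (s*t) • (A*B - B*A) := by
    intro s t A B
    simp only [Glnm.comm, smul_mul_assoc, mul_smul_comm, smul_smul, smul_sub, mul_comm t s]
  rw [e1, e1, e1]
  have hD2 : (Eac*Eca)*(Ebc*Ecb) - (Ebc*Ecb)*(Eac*Eca)
      = -((Eab*Eba)*(Ebc*Ecb) - (Ebc*Ecb)*(Eab*Eba)) :=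
    eq_neg_of_add_eq_zero_right hsum1
  have hD3 : (Eac*Eca)*(Eba*Eab) - (Eba*Eab)*(Eac*Eca)
      = -((Eab*Eba)*(Ebc*Ecb) - (Ebc*Ecb)*(Eab*Eba)) :=
    eq_neg_of_add_eq_zero_right hsum2
  rw [hD2, hD3]
  have n1 : lamA - lamB ≠ 0 := sub_ne_zero_of_ne hl1
  have n2 : lamA - lamC ≠ 0 := sub_ne_zero_of_ne hl2
  have n3 : lamB - lamC ≠ 0 := sub_ne_zero_of_ne hl3
  have n4 : lamB - lamA ≠ 0 := sub_ne_zero_of_ne hl1.symm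
  have hcoef : (lamA - lamB)⁻¹ * (lamB - lamC)⁻¹
      - (lamA - lamC)⁻¹ * (lamB - lamC)⁻¹
      + (lamA - lamC)⁻¹ * (lamB - lamA)⁻¹ = 0 := by
    field_simp
    ring
  calc ((lamA - lamB)⁻¹ * (lamB - lamC)⁻¹) • ((Eab*Eba)*(Ebc*Ecb) - (Ebc*Ecb)*(Eab*Eba))
        + ((lamA - lamC)⁻¹ * (lamB - lamC)⁻¹) • (-((Eab*Eba)*(Ebc*Ecb) - (Ebc*Ecb)*(Eab*Eba)))
        - ((lamA - lamC)⁻¹ * (lamB - lamA)⁻¹) • (-((Eab*Eba)*(Ebc*Ecb) - (Ebc*Ecb)*(Eab*Eba)))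
      = ((lamA - lamB)⁻¹ * (lamB - lamC)⁻¹
          - (lamA - lamC)⁻¹ * (lamB - lamC)⁻¹
          + (lamA - lamC)⁻¹ * (lamB - lamA)⁻¹)
          • ((Eab*Eba)*(Ebc*Ecb) - (Ebc*Ecb)*(Eab*Eba)) := by module
    _ = 0 := by rw [hcoef, zero_smul]
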